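/- arXiv:1803.10104 — 3 statements merged into one kernel-verified Lean document; each statement's English description precedes it below -/
import Mathlib

section
/- Let G = (V,E) be a finite directed graph consisting of a single strongly connected component, and let T_{r,m} = ((W, B ∪ R), τ) be a witness-tree of G with root r and m = |R| red edges. Then the number of simple cycles of G that contain r is at most m. -/
/-- A simple cycle of a directed graph with edge relation `E`: a nonempty
finite set `C` of vertices together with a bijection `η : C → C` (represented
as a function on all of `V` that is the identity outside `C`), such that
`(v, η v)` is an edge for every `v ∈ C`, and `η^[n] v = v` iff `|C| ∣ n`. -/
structure SimpleCycle {V : Type*} (E : V → V → Prop) where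
  C : Finset V
  nonempty : C.Nonempty
  η : V → V
  bij : Set.BijOn η (↑C) (↑C)
  fix : ∀ v ∉ C, η v = v
  edge : ∀ v ∈ C, E v (η v)
  minimal : ∀ v ∈ C, ∀ n : ℕ, η^[n] v = v ↔ C.card ∣ n

/-- A witness-tree of a directed graph `(V, E)` with root label `r ∈ V`:
a vertex set `W` with a distinguished root, blue edges `B`, red edges `R`,
and a labeling `τ : W → V` satisfying conditions (1)-(9). -/
structure WitnessTree {V : Type*} (E : V → V → Prop) (r : V) (W : Type*) where
  root : W
  B : Finset (W × W)
  R : Finset (W × W)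
  τ : W → V
  /-- (1) the edges are partitioned into blue and red edges -/
  disj : ∀ e : W × W, ¬(e ∈ B ∧ e ∈ R)
  /-- (2) all red edges lead back to the root -/
  red_to_root : ∀ e ∈ R, e.2 = root
  /-- (3) no blue edge leads back to the root -/
  blue_not_root : ∀ e ∈ B, e.2 ≠ root
  /-- (4) every non-root vertex has at least one incoming blue edge -/
  blue_exists : ∀ w : W, w ≠ root → ∃ w', (w', w) ∈ B
  /-- (5) every vertex has at most one incoming blue edge -/
  blue_unique : ∀ w w₁ w₂ : W, (w₁, w) ∈ B → (w₂, w) ∈ B → w₁ = w₂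
  /-- (6) the graph is labeled by an unfolding of `G` -/
  label_edge : ∀ e : W × W, (e ∈ B ∨ e ∈ R) → E (τ e.1) (τ e.2)
  /-- (7) the unfolding is complete -/
  complete : ∀ (w : W) (v' : V), E (τ w) v' →
    ∃ w', ((w, w') ∈ B ∨ (w, w') ∈ R) ∧ τ w' = v'
  /-- (8) on every path from the root to a leaf in the rooted tree `(W, B)`,
  distinct vertices carry distinct labels (equivalently, the label of a vertex
  differs from the labels of all of its strict blue descendants) -/
  path_distinct : ∀ w w' : W, Relation.TransGen (fun a b => (a, b) ∈ B) w w' → τ w ≠ τ w'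
  /-- (9) the root is labeled by `r` -/
  root_label : τ root = r


/-!
Unfold a simple cycle `r → η r → ⋯ → η^[k-1] r → r` into the witness-tree, starting at the root.
Completeness provides an edge for each step; the first `k - 1` steps reach labels different from
`r`, so they cannot be red edges (which end at the root, labelled `r`), and the last step reaches
`r` again, so it cannot be blue (a blue descendant of the root labelled `r` contradicts (8)).
Hence every such cycle ends in a red edge. Since blue parents are unique and the root has none,
the source of that red edge determines the blue path to it, hence the labels `η^[n] r`, hence
the cycle.
-/

namespace SimpleCycle

variable {V : Type*} {E : V → V → Prop} (c : SimpleCycle E) {r : V}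

lemma iterate_mem (hr : r ∈ c.C) (n : ℕ) : c.η^[n] r ∈ c.C :=
  c.bij.mapsTo.iterate n hr

lemma minimalPeriod_eq_card (hr : r ∈ c.C) : Function.minimalPeriod c.η r = c.C.card :=
  Nat.dvd_right_iff_eq.mp fun n => by
    rw [← Function.isPeriodicPt_iff_minimalPeriod_dvd, ← c.minimal r hr]
    rfl

lemma iterate_card (hr : r ∈ c.C) : c.η^[c.C.card] r = r :=
  (c.minimal r hr _).mpr dvd_rfl

lemma iterate_ne_of_lt_card (hr : r ∈ c.C) {n : ℕ} (hn0 : 0 < n) (hn : n < c.C.card) :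
    c.η^[n] r ≠ r :=
  fun h => absurd (Nat.le_of_dvd hn0 ((c.minimal r hr n).mp h)) (not_le.mpr hn)

lemma edge_iterate (hr : r ∈ c.C) (n : ℕ) : E (c.η^[n] r) (c.η^[n + 1] r) := by
  rw [Function.iterate_succ_apply']
  exact c.edge _ (c.iterate_mem hr n)

lemma mem_iff_exists_iterate (hr : r ∈ c.C) {v : V} : v ∈ c.C ↔ ∃ n, c.η^[n] r = v := by
  classical
  refine ⟨fun hv => ?_, fun ⟨n, hn⟩ => hn ▸ c.iterate_mem hr n⟩
  have horbit : (Finset.range c.C.card).image (c.η^[·] r) = c.C := by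
    refine Finset.eq_of_subset_of_card_le (Finset.image_subset_iff.mpr fun n _ => ?_) ?_
    · exact c.iterate_mem hr n
    · rw [Finset.card_image_of_injOn, Finset.card_range]
      simpa [← c.minimalPeriod_eq_card hr] using Function.iterate_injOn_Iio_minimalPeriod
  obtain ⟨n, -, hn⟩ := Finset.mem_image.mp (horbit ▸ hv)
  exact ⟨n, hn⟩

lemma eq_of_iterate_eq {c₁ c₂ : SimpleCycle E} (hr₁ : r ∈ c₁.C) (hr₂ : r ∈ c₂.C)
    (h : ∀ n, c₁.η^[n] r = c₂.η^[n] r) : c₁ = c₂ := by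
  have hC : c₁.C = c₂.C := by
    ext v
    simp only [c₁.mem_iff_exists_iterate hr₁, c₂.mem_iff_exists_iterate hr₂, h]
  have hη : c₁.η = c₂.η := by
    funext v
    by_cases hv : v ∈ c₁.C
    · obtain ⟨n, rfl⟩ := (c₁.mem_iff_exists_iterate hr₁).mp hv
      have hsucc := h (n + 1)
      rw [Function.iterate_succ_apply', Function.iterate_succ_apply', h n] at hsucc
      rwa [h n]
    · rw [c₁.fix v hv, c₂.fix v (hC ▸ hv)]
  cases c₁
  cases c₂
  simp_all

end SimpleCycle

namespace WitnessTree

variable {V W : Type*} {E : V → V → Prop} {r : V} (T : WitnessTree E r W)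

/-- `T.Unfolds s i w`: the blue path from the root to `w` has length `i` and is labelled
`s 0, …, s i`. -/
inductive Unfolds (s : ℕ → V) : ℕ → W → Prop
  | root : s 0 = r → Unfolds s 0 T.root
  | blue {i : ℕ} {w w' : W} : Unfolds s i w → (w, w') ∈ T.B → T.τ w' = s (i + 1) →
      Unfolds s (i + 1) w'

variable {T}

lemma Unfolds.label {s : ℕ → V} {i : ℕ} {w : W} (h : T.Unfolds s i w) : T.τ w = s i := by
  cases h with
  | root hs => rw [T.root_label, hs]
  | blue _ _ hτ => exact hτ

lemma Unfolds.reflTransGen {s : ℕ → V} {i : ℕ} {w : W} (h : T.Unfolds s i w) :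
    Relation.ReflTransGen (fun a b => (a, b) ∈ T.B) T.root w := by
  induction h with
  | root => exact .refl
  | blue _ hB _ ih => exact ih.tail hB

lemma Unfolds.unique {s s' : ℕ → V} {i j : ℕ} {w : W} (h : T.Unfolds s i w)
    (h' : T.Unfolds s' j w) : i = j ∧ ∀ n ≤ i, s n = s' n := by
  induction h generalizing j with
  | root hs =>
    cases h' with
    | root hs' => exact ⟨rfl, fun n hn => by rw [Nat.le_zero.mp hn, hs, hs']⟩
    | blue _ hB _ => exact absurd rfl (T.blue_not_root _ hB)
  | @blue i w w' _ hB hτ ih =>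
    cases h' with
    | root => exact absurd rfl (T.blue_not_root _ hB)
    | @blue j w₂ _ h₂ hB₂ hτ₂ =>
      obtain rfl := T.blue_unique w' w w₂ hB hB₂
      obtain ⟨rfl, hs⟩ := ih h₂
      refine ⟨rfl, fun n hn => ?_⟩
      rcases Nat.lt_or_eq_of_le hn with hn | rfl
      · exact hs n (Nat.lt_succ_iff.mp hn)
      · rw [← hτ, hτ₂]

lemma exists_unfolds (T : WitnessTree E r W) {s : ℕ → V} {i : ℕ} (hs0 : s 0 = r)
    (hE : ∀ n < i, E (s n) (s (n + 1))) (hne : ∀ n < i, s (n + 1) ≠ r) :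
    ∃ w, T.Unfolds s i w := by
  induction i with
  | zero => exact ⟨T.root, .root hs0⟩
  | succ i ih =>
    obtain ⟨w, hw⟩ := ih (fun n hn => hE n (by omega)) (fun n hn => hne n (by omega))
    obtain ⟨w', hw', hτ⟩ := T.complete w _ (hw.label ▸ hE i (by omega))
    refine ⟨w', hw.blue (hw'.resolve_right fun hR => hne i (by omega) ?_) hτ⟩
    have hroot : w' = T.root := T.red_to_root _ hR
    rw [← hτ, hroot, T.root_label]

lemma Unfolds.mem_R {s : ℕ → V} {i : ℕ} {w : W} (h : T.Unfolds s i w) (hE : E (s i) r) :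
    (w, T.root) ∈ T.R := by
  obtain ⟨w', hw', hτ⟩ := T.complete w r (h.label ▸ hE)
  rcases hw' with hB | hR
  · exact absurd (hτ.trans T.root_label.symm) (T.path_distinct _ _ (.tail' h.reflTransGen hB)).symm
  · rwa [← T.red_to_root _ hR]

lemma exists_unfolds_cycle_mem_R (T : WitnessTree E r W) (c : SimpleCycle E) (hr : r ∈ c.C) :
    ∃ w, T.Unfolds (c.η^[·] r) (c.C.card - 1) w ∧ (w, T.root) ∈ T.R := by
  have hk : 0 < c.C.card := c.nonempty.card_pos
  obtain ⟨w, hw⟩ := T.exists_unfolds (s := (c.η^[·] r)) (i := c.C.card - 1) rfl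
    (fun n _ => c.edge_iterate hr n) (fun n hn => c.iterate_ne_of_lt_card hr n.succ_pos (by omega))
  refine ⟨w, hw, hw.mem_R ?_⟩
  simpa [Nat.sub_add_cancel hk, c.iterate_card hr] using c.edge_iterate hr (c.C.card - 1)

lemma Unfolds.cycle_eq {c₁ c₂ : SimpleCycle E} (hr₁ : r ∈ c₁.C) (hr₂ : r ∈ c₂.C) {w : W}
    (h₁ : T.Unfolds (c₁.η^[·] r) (c₁.C.card - 1) w)
    (h₂ : T.Unfolds (c₂.η^[·] r) (c₂.C.card - 1) w) : c₁ = c₂ := by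
  obtain ⟨hlen, hs⟩ := h₁.unique h₂
  have hk₁ : 0 < c₁.C.card := c₁.nonempty.card_pos
  have hk₂ : 0 < c₂.C.card := c₂.nonempty.card_pos
  have hk : c₁.C.card = c₂.C.card := by omega
  refine SimpleCycle.eq_of_iterate_eq hr₁ hr₂ fun n => ?_
  rw [← Function.iterate_mod_minimalPeriod_eq, ← Function.iterate_mod_minimalPeriod_eq (f := c₂.η),
    c₁.minimalPeriod_eq_card hr₁, c₂.minimalPeriod_eq_card hr₂, ← hk]
  exact hs _ (Nat.le_sub_one_of_lt (Nat.mod_lt n hk₁))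

end WitnessTree

theorem witness_tree_bounds_cycles_general {V : Type*} (E : V → V → Prop) (r : V) (W : Type*)
    (T : WitnessTree E r W) :
    Nat.card {c : SimpleCycle E // r ∈ c.C} ≤ T.R.card := by
  choose w hw hR using fun c : {c : SimpleCycle E // r ∈ c.C} =>
    T.exists_unfolds_cycle_mem_R c.1 c.2
  let redEdge (c : {c : SimpleCycle E // r ∈ c.C}) : T.R := ⟨(w c, T.root), hR c⟩
  have hinj : Function.Injective redEdge := fun c₁ c₂ h =>
    Subtype.ext <| (hw c₁).cycle_eq c₁.2 c₂.2 (by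
      rw [show w c₁ = w c₂ from congrArg (·.1.1) h]
      exact hw c₂)
  calc Nat.card {c : SimpleCycle E // r ∈ c.C} ≤ Nat.card T.R :=
        Nat.card_le_card_of_injective redEdge hinj
    _ = T.R.card := Nat.card_eq_finsetCard _

/-- Lemma 2 (soundness of witness-trees): if `G` is a single SCC and has a
witness-tree with root label `r` and `m` red edges, then `G` has at most `m`
simple cycles containing `r`. -/
theorem witness_tree_bounds_cycles {V : Type*} [Fintype V] (E : V → V → Prop)
    (hscc : ∀ u v : V, Relation.ReflTransGen E u v) (r : V)
    (W : Type*) [Finite W] (T : WitnessTree E r W) :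
    Nat.card {c : SimpleCycle E // r ∈ c.C} ≤ T.R.card :=
  witness_tree_bounds_cycles_general E r W T
end

section
/- (Soundness of bounded-synthesis annotations.) Let (V,E) be a finite directed graph, F ⊆ V a set of rejecting vertices, and v₀ ∈ V an initial vertex. Suppose λ : V → {⊥} ∪ ℕ is a valid annotation, i.e., (i) λ(v₀) ≠ ⊥, and (ii) whenever λ(v) = k ∈ ℕ and (v,v') ∈ E, then λ(v') = k' ∈ ℕ with k' ≥ k, and moreover k' > k if v' ∈ F. Then every infinite path v₀ v₁ v₂ … in (V,E) starting at v₀ (with (vᵢ, vᵢ₊₁) ∈ E for all i) visits F only finitely often; i.e., there is no infinite path from v₀ on which vertices of F occur infinitely many times. -/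
/-!
Along a path from `v₀` the annotation is defined at every vertex and its values form a
nondecreasing sequence that strictly increases at each visit to `F`. So distinct visits to `F`
carry distinct values, all taken from the finite range of the annotation.
-/

theorem strictMonoOn_of_monotone_of_lt_succ {β : Type*} [Preorder β] {r : ℕ → β} {S : Set ℕ}
    (hmono : Monotone r) (hlt : ∀ i, i + 1 ∈ S → r i < r (i + 1)) : StrictMonoOn r S := by
  intro i _ j hj hij
  obtain ⟨m, rfl⟩ : ∃ m, j = m + 1 := ⟨j - 1, by omega⟩
  calc r i ≤ r m := hmono (by omega)
    _ < r (m + 1) := hlt m hj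

theorem exists_rank_along_path {V : Type*} {E : V → V → Prop} {F : Set V}
    {lam : V → Option ℕ}
    (hstep : ∀ v v' : V, ∀ k : ℕ, lam v = some k → E v v' →
      ∃ k' : ℕ, lam v' = some k' ∧ k ≤ k' ∧ (v' ∈ F → k < k'))
    {p : ℕ → V} (hp : ∀ i, E (p i) (p (i + 1))) (h0 : lam (p 0) ≠ none) :
    ∃ r : ℕ → ℕ, (∀ i, lam (p i) = some (r i)) ∧ Monotone r ∧
      ∀ i, p (i + 1) ∈ F → r i < r (i + 1) := by
  have hdefined : ∀ i, ∃ k, lam (p i) = some k := by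
    intro i
    induction i with
    | zero => exact Option.ne_none_iff_exists'.mp h0
    | succ i ih =>
      obtain ⟨k, hk⟩ := ih
      obtain ⟨k', hk', -⟩ := hstep _ _ k hk (hp i)
      exact ⟨k', hk'⟩
  choose r hr using hdefined
  have hrstep : ∀ i, r i ≤ r (i + 1) ∧ (p (i + 1) ∈ F → r i < r (i + 1)) := by
    intro i
    obtain ⟨k', hk', hstep'⟩ := hstep _ _ (r i) (hr i) (hp i)
    obtain rfl : k' = r (i + 1) := Option.some_injective _ (hk'.symm.trans (hr (i + 1)))
    exact hstep'
  exact ⟨r, hr, monotone_nat_of_le_succ fun i => (hrstep i).1, fun i => (hrstep i).2⟩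

/-- Soundness of bounded-synthesis annotations: if a finite directed graph
`(V, E)` with rejecting vertices `F` and initial vertex `v₀` admits a valid
annotation `lam : V → Option ℕ` (where `none` plays the role of `⊥`), then
every infinite path starting at `v₀` visits `F` only finitely often. -/
theorem annotation_sound {V : Type*} [Fintype V] (E : V → V → Prop)
    (F : Set V) (v₀ : V) (lam : V → Option ℕ)
    (h0 : lam v₀ ≠ none)
    (hstep : ∀ v v' : V, ∀ k : ℕ, lam v = some k → E v v' →
      ∃ k' : ℕ, lam v' = some k' ∧ k ≤ k' ∧ (v' ∈ F → k < k')) :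
    ∀ p : ℕ → V, p 0 = v₀ → (∀ i, E (p i) (p (i + 1))) →
      {i : ℕ | p i ∈ F}.Finite := by
  intro p hp0 hp
  obtain ⟨r, hr, hmono, hlt⟩ := exists_rank_along_path hstep hp (hp0 ▸ h0)
  have hstrict : StrictMonoOn r {i | p i ∈ F} := strictMonoOn_of_monotone_of_lt_succ hmono hlt
  have hvalues : r '' {i | p i ∈ F} ⊆ some ⁻¹' Set.range lam := by
    rintro _ ⟨i, -, rfl⟩
    exact ⟨p i, hr i⟩
  have hfinite : (some ⁻¹' Set.range lam : Set ℕ).Finite :=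
    (Set.finite_range lam).preimage (Option.some_injective ℕ).injOn
  exact (hfinite.subset hvalues).of_finite_image hstrict.injOn
end

section
/- (Completeness of bounded-synthesis annotations.) Let (V,E) be a finite directed graph, F ⊆ V a set of rejecting vertices, and v₀ ∈ V an initial vertex. Suppose that no infinite path starting at v₀ visits F infinitely often. Then there exists a valid annotation λ : V → {⊥} ∪ ℕ, i.e., a function with (i) λ(v₀) ≠ ⊥, and (ii) whenever λ(v) = k ∈ ℕ and (v,v') ∈ E, then λ(v') = k' ∈ ℕ with k' ≥ k, and k' > k if v' ∈ F; moreover λ can be chosen so that all its natural-number values are at most |V|. -/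
/-!
Label each vertex `v` with the largest number of visits to `F` made by a finite walk from `v₀`
to `v` (`none` if there is no such walk). Extending a walk by an edge `v → v'` adds one visit
exactly when `v' ∈ F`, so these labels satisfy the annotation conditions as soon as they are
finite. They are even at most `|V|`: a walk with more visits to `F` passes twice through the
same vertex of `F`, and pumping the cycle in between yields an infinite path from `v₀` visiting
`F` infinitely often.
-/

theorem Nat.add_one_mod_eq_or {t d : ℕ} (hd : 0 < d) :
    (t + 1) % d = t % d + 1 ∨ (t + 1) % d = 0 ∧ t % d + 1 = d := by
  have hsplit : t + 1 = (t % d + 1) + d * (t / d) := by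
    have := Nat.mod_add_div t d; omega
  rcases Nat.lt_or_ge (t % d + 1) d with hlt | hge
  · left
    rw [hsplit, Nat.add_mul_mod_self_left, Nat.mod_eq_of_lt hlt]
  · have hwrap : t % d + 1 = d := le_antisymm (Nat.mod_lt t hd) hge
    right
    rw [hsplit, Nat.add_mul_mod_self_left, hwrap, Nat.mod_self]
    exact ⟨rfl, rfl⟩

section Lasso

variable {V : Type*} {E : V → V → Prop}

theorem exists_path_of_cycle {p : ℕ → V} {i d : ℕ} (hd : 0 < d)
    (hp : ∀ m < i + d, E (p m) (p (m + 1))) (hcyc : p (i + d) = p i) :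
    ∃ q : ℕ → V, q 0 = p 0 ∧ (∀ m, E (q m) (q (m + 1))) ∧ {m | q m = p i}.Infinite := by
  -- `g` follows the indices `0, …, i + d - 1` and then runs through `i, …, i + d - 1` forever.
  let g : ℕ → ℕ := fun m => if m < i then m else i + (m - i) % d
  have hg_lt : ∀ m, g m < i + d := fun m => by
    have := Nat.mod_lt (m - i) hd
    dsimp only [g]; split_ifs <;> omega
  have hg_succ : ∀ m, p (g (m + 1)) = p (g m + 1) := by
    intro m
    dsimp only [g]
    by_cases hm : m < i
    · rw [if_pos hm]
      split_ifs with hm'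
      · rfl
      · rw [show m + 1 - i = 0 by omega, Nat.zero_mod]; congr 1; omega
    · rw [if_neg hm, if_neg (by omega), show m + 1 - i = m - i + 1 by omega]
      rcases Nat.add_one_mod_eq_or (t := m - i) hd with h | ⟨h0, hwrap⟩
      · rw [h]; rfl
      · rw [h0, add_zero, add_assoc, hwrap, hcyc]
  refine ⟨p ∘ g, ?_, fun m => ?_, ?_⟩
  · simp only [Function.comp_apply, g]
    split_ifs with hi
    · rfl
    · obtain rfl : i = 0 := by omega
      simp
  · simpa only [Function.comp_apply, hg_succ] using hp _ (hg_lt m)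
  · refine Set.infinite_of_injective_forall_mem (f := fun t => i + t * d) ?_ fun t => ?_
    · intro s t hst
      simpa [hd.ne'] using hst
    · simp [g]

end Lasso

section VisitCounts

variable {V : Type*} {E : V → V → Prop} {F : Set V} {v₀ : V}

open Classical in
def visitCounts (E : V → V → Prop) (F : Set V) (v₀ v : V) : Set ℕ :=
  {k | ∃ n, ∃ p : ℕ → V, p 0 = v₀ ∧ (∀ m < n, E (p m) (p (m + 1))) ∧ p n = v ∧
    Nat.count (fun m => p (m + 1) ∈ F) n = k}

open Classical in
theorem zero_mem_visitCounts : 0 ∈ visitCounts E F v₀ v₀ :=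
  ⟨0, fun _ => v₀, rfl, fun _ h => absurd h (Nat.not_lt_zero _), rfl, Nat.count_zero _⟩

open Classical in
theorem add_ite_mem_visitCounts {v v' : V} {k : ℕ} (hk : k ∈ visitCounts E F v₀ v)
    (hvv' : E v v') : k + (if v' ∈ F then 1 else 0) ∈ visitCounts E F v₀ v' := by
  obtain ⟨n, p, hp0, hp, rfl, rfl⟩ := hk
  refine ⟨n + 1, Function.update p (n + 1) v', ?_, fun m hm => ?_, Function.update_self .., ?_⟩
  · rw [Function.update_of_ne (by omega), hp0]
  · rw [Function.update_of_ne (by omega)]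
    rcases (Nat.lt_succ_iff.1 hm).lt_or_eq with hm | rfl
    · rw [Function.update_of_ne (by omega)]
      exact hp m hm
    · rw [Function.update_self]
      exact hvv'
  · have hprefix : Nat.count (fun m => Function.update p (n + 1) v' (m + 1) ∈ F) n =
        Nat.count (fun m => p (m + 1) ∈ F) n := by
      simp only [Nat.count_eq_card_filter_range]
      congr 1
      refine Finset.filter_congr fun m hm => ?_
      rw [Function.update_of_ne (by have := Finset.mem_range.1 hm; omega)]
    rw [Nat.count_succ, hprefix, Function.update_self]

theorem le_card_of_mem_visitCounts [Fintype V]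
    (h : ¬ ∃ p : ℕ → V, p 0 = v₀ ∧ (∀ i, E (p i) (p (i + 1))) ∧
      {i : ℕ | p i ∈ F}.Infinite)
    {v : V} {k : ℕ} (hk : k ∈ visitCounts E F v₀ v) : k ≤ Fintype.card V := by
  classical
  obtain ⟨n, p, hp0, hp, -, rfl⟩ := hk
  by_contra! hlt
  rw [Nat.count_eq_card_filter_range] at hlt
  obtain ⟨a, ha, b, hb, hab, heq⟩ := Finset.exists_ne_map_eq_of_card_lt_of_maps_to
    (f := fun m => p (m + 1)) (t := Finset.univ) (by simpa using hlt) (by simp)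
  simp only [Finset.mem_filter, Finset.mem_range] at ha hb
  wlog hab' : a < b generalizing a b
  · exact this b a hab.symm heq.symm hb ha (by omega)
  have hcyc : p (a + 1 + (b - a)) = p (a + 1) := by
    rw [show a + 1 + (b - a) = b + 1 by omega]
    exact heq.symm
  obtain ⟨q, hq0, hq, hinf⟩ :=
    exists_path_of_cycle (by omega : 0 < b - a) (fun m hm => hp m (by omega)) hcyc
  refine h ⟨q, hq0.trans hp0, hq, hinf.mono fun m (hm : q m = p (a + 1)) => ?_⟩
  exact show q m ∈ F from hm ▸ ha.2

open Classical in
noncomputable def maxVisitCount (E : V → V → Prop) (F : Set V) (v₀ v : V) : Option ℕ :=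
  if (visitCounts E F v₀ v).Nonempty then some (sSup (visitCounts E F v₀ v)) else none

theorem maxVisitCount_of_nonempty {v : V} (hne : (visitCounts E F v₀ v).Nonempty) :
    maxVisitCount E F v₀ v = some (sSup (visitCounts E F v₀ v)) :=
  if_pos hne

theorem isGreatest_of_maxVisitCount_eq_some {v : V} {k : ℕ}
    (hbdd : BddAbove (visitCounts E F v₀ v)) (hk : maxVisitCount E F v₀ v = some k) :
    IsGreatest (visitCounts E F v₀ v) k := by
  unfold maxVisitCount at hk
  split_ifs at hk with hne
  cases hk
  exact ⟨Nat.sSup_mem hne hbdd, fun _ => le_csSup hbdd⟩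

end VisitCounts

/-- Completeness of bounded-synthesis annotations: if no infinite path of the
finite directed graph `(V, E)` starting at `v₀` visits the rejecting set `F`
infinitely often, then there is a valid annotation `lam : V → Option ℕ`
(where `none` plays the role of `⊥`) whose numeric values are all at most
`|V|`. -/
theorem annotation_complete {V : Type*} [Fintype V] (E : V → V → Prop)
    (F : Set V) (v₀ : V)
    (h : ¬ ∃ p : ℕ → V, p 0 = v₀ ∧ (∀ i, E (p i) (p (i + 1))) ∧
      {i : ℕ | p i ∈ F}.Infinite) :
    ∃ lam : V → Option ℕ,
      lam v₀ ≠ none ∧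
      (∀ v v' : V, ∀ k : ℕ, lam v = some k → E v v' →
        ∃ k' : ℕ, lam v' = some k' ∧ k ≤ k' ∧ (v' ∈ F → k < k')) ∧
      (∀ v : V, ∀ k : ℕ, lam v = some k → k ≤ Fintype.card V) := by
  have hbdd (v : V) : BddAbove (visitCounts E F v₀ v) :=
    ⟨_, fun _ hk => le_card_of_mem_visitCounts h hk⟩
  refine ⟨maxVisitCount E F v₀, ?_, fun v v' k hk hvv' => ?_, fun v k hk => ?_⟩
  · rw [maxVisitCount_of_nonempty ⟨0, zero_mem_visitCounts⟩]
    exact Option.some_ne_none _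
  · have hk' := add_ite_mem_visitCounts (isGreatest_of_maxVisitCount_eq_some (hbdd v) hk).1 hvv'
    have hle := le_csSup (hbdd v') hk'
    refine ⟨_, maxVisitCount_of_nonempty ⟨_, hk'⟩, (Nat.le_add_right _ _).trans hle,
      fun hF => ?_⟩
    rw [if_pos hF] at hle
    exact hle
  · exact le_card_of_mem_visitCounts h (isGreatest_of_maxVisitCount_eq_some (hbdd v) hk).1
end
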